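/- arXiv:2510.21691 — 5 statements merged into one kernel-verified Lean document; each statement's English description precedes it below -/
import Mathlib

section
/- Let k* ∈ [0,1], let r be a probability density on [0,1], let Acc : [0,1] → [0,1] be measurable, and suppose Acc(p) ≤ 1 − k* for all p. Let P₂ = {p ∈ [0,1] : Acc(p) ≥ 1/2}. Then ∫₀¹ r(p)|Acc(p) − p| dp ≤ 1/2 + ∫₀¹ r(p)|1/2 − p| dp − k*·∫_{P₂} r(p) dp. -/
open MeasureTheory

/-- ECE upper bound under incorrect invariance: if `Acc(p) ≤ 1 − k*` on every fiber
and `P₂ = {p ∈ [0,1] : Acc(p) ≥ 1/2}`, then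
`∫₀¹ r(p)|Acc(p) − p| dp ≤ 1/2 + ∫₀¹ r(p)|1/2 − p| dp − k*·∫_{P₂} r(p) dp`. -/
theorem ece_upper_bound_invariant (r Acc : ℝ → ℝ) (kstar : ℝ)
    (hk : kstar ∈ Set.Icc (0:ℝ) 1)
    (hr_meas : Measurable r) (hAcc_meas : Measurable Acc)
    (hr_nonneg : ∀ p ∈ Set.Icc (0:ℝ) 1, 0 ≤ r p)
    (hr_density : ∫ p in (0:ℝ)..1, r p = 1)
    (hAcc : ∀ p ∈ Set.Icc (0:ℝ) 1, Acc p ∈ Set.Icc (0:ℝ) 1)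
    (hAcc_ub : ∀ p ∈ Set.Icc (0:ℝ) 1, Acc p ≤ 1 - kstar)
    (hint1 : IntervalIntegrable (fun p => r p * |Acc p - p|) volume 0 1)
    (hint2 : IntervalIntegrable (fun p => r p * |1/2 - p|) volume 0 1)
    (hint3 : IntegrableOn r ({p : ℝ | 1/2 ≤ Acc p} ∩ Set.Icc 0 1) volume) :
    ∫ p in (0:ℝ)..1, r p * |Acc p - p| ≤
      1/2 + (∫ p in (0:ℝ)..1, r p * |1/2 - p|)
        - kstar * ∫ p in ({p : ℝ | 1/2 ≤ Acc p} ∩ Set.Icc 0 1), r p := by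
  set S : Set ℝ := {p : ℝ | 1/2 ≤ Acc p} ∩ Set.Icc 0 1 with hS
  have hSmeas : MeasurableSet S :=
    (measurableSet_le measurable_const hAcc_meas).inter measurableSet_Icc
  have hr_int : IntervalIntegrable r volume 0 1 := by
    by_contra h
    rw [intervalIntegral.integral_undef h] at hr_density
    norm_num at hr_density
  have hind_int : IntervalIntegrable (fun p => S.indicator r p) volume 0 1 := by
    rw [intervalIntegrable_iff_integrableOn_Ioc_of_le (by norm_num : (0:ℝ) ≤ 1)]
    exact ((integrable_indicator_iff hSmeas).2 hint3).integrableOn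
  have hmono : ∫ p in (0:ℝ)..1, r p * |Acc p - p|
      ≤ ∫ p in (0:ℝ)..1, (r p * (1/2) + r p * |1/2 - p| - kstar * S.indicator r p) := by
    apply intervalIntegral.integral_mono_on (by norm_num) hint1
    · exact ((hr_int.mul_const _).add hint2).sub (hind_int.const_mul kstar)
    · intro p hp
      have hr0 := hr_nonneg p hp
      have hA := hAcc p hp
      by_cases hmem : p ∈ S
      · have h2 : (1/2:ℝ) ≤ Acc p := hmem.1
        have hAub := hAcc_ub p hp
        rw [Set.indicator_of_mem hmem]
        have key : |Acc p - p| ≤ 1/2 + |1/2 - p| - kstar := by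
          rcases abs_cases (Acc p - p) with ⟨h1, _⟩ | ⟨h1, _⟩ <;>
            rcases abs_cases ((1:ℝ)/2 - p) with ⟨h3, _⟩ | ⟨h3, _⟩ <;>
            linarith [hA.1, hA.2, hp.1, hp.2, hk.1, hk.2]
        nlinarith [mul_le_mul_of_nonneg_left key hr0]
      · rw [Set.indicator_of_notMem hmem]
        have key : |Acc p - p| ≤ 1/2 + |1/2 - p| := by
          rcases abs_cases (Acc p - p) with ⟨h1, _⟩ | ⟨h1, _⟩ <;>
            rcases abs_cases ((1:ℝ)/2 - p) with ⟨h3, _⟩ | ⟨h3, _⟩ <;>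
            linarith [hA.1, hA.2, hp.1, hp.2]
        nlinarith [mul_le_mul_of_nonneg_left key hr0]
  have hindeq : ∫ p in (0:ℝ)..1, S.indicator r p = ∫ p in S, r p := by
    rw [intervalIntegral.integral_of_le (by norm_num : (0:ℝ) ≤ 1)]
    rw [setIntegral_indicator hSmeas]
    apply setIntegral_congr_set
    rw [MeasureTheory.ae_eq_set]
    constructor
    · refine measure_mono_null ?_ (measure_empty (μ := volume))
      intro x hx
      exact absurd hx.1.2 hx.2
    · refine measure_mono_null ?_ (measure_singleton (0:ℝ))
      intro x hx
      rcases hx with ⟨hxS, hxI⟩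
      have hxIcc : x ∈ Set.Icc (0:ℝ) 1 := hxS.2
      have hxI' : x ∉ Set.Ioc (0:ℝ) 1 := fun h => hxI ⟨h, hxS⟩
      simp only [Set.mem_Ioc, not_and_or, not_lt, not_le] at hxI'
      have : x = 0 := by
        rcases hxI' with h | h
        · linarith [hxIcc.1]
        · linarith [hxIcc.2]
      simp [this]
  rw [intervalIntegral.integral_sub ((hr_int.mul_const _).add hint2)
      (hind_int.const_mul kstar),
    intervalIntegral.integral_add (hr_int.mul_const _) hint2,
    intervalIntegral.integral_mul_const, hr_density,
    intervalIntegral.integral_const_mul, hindeq] at hmono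
  linarith [hmono]
end

section
/- Let X be a measure space with probability density q, let G be a group acting measurably on X, F a fundamental domain so that ∫_X φ dq = ∫_F ∫_{Gx} φ(z) q(z) dz dx for integrable φ. Let f : X → Y with Y finite, and let h : X → Y be any G-invariant function. Then the classification error ∫_X q(x)·1[f(x) ≠ h(x)] dx is at most ∫_F κ(Gx) dx, where κ(Gx) = max_{y ∈ Y} ∫_{Gx} q(z)·1[f(z) ≠ y] dz is the minority label total dissent. -/
open MeasureTheory

/-- Classification error upper bound via minority label total dissent: if `h` is
`G`-invariant and the probability measure `μ` on `X` decomposes into orbit measures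
`orb i` indexed by a fundamental domain `(ι, ν)`, then the classification error of `h`
is at most the integrated minority label total dissent
`∫_F κ(Gx) dx`, `κ(Gx) = max_y ∫_{Gx} q(z)·1[f(z) ≠ y] dz`. -/
theorem classification_error_le_minority_dissent
    {X : Type*} [MeasurableSpace X] {Y : Type*} [Fintype Y] [Nonempty Y] [DecidableEq Y]
    {G : Type*} [Group G] [MulAction G X]
    {ι : Type*} [MeasurableSpace ι]
    (μ : Measure X) [IsProbabilityMeasure μ]
    (ν : Measure ι) (orb : ι → Measure X) (rep : ι → X)
    (hdecomp : ∀ φ : X → ℝ, Integrable φ μ →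
      ∫ x, φ x ∂μ = ∫ i, (∫ z, φ z ∂(orb i)) ∂ν)
    (horb : ∀ i, ∀ᵐ z ∂(orb i), z ∈ MulAction.orbit G (rep i))
    (f h : X → Y)
    (hinv : ∀ (g : G) (x : X), h (g • x) = h x)
    (herr_int : Integrable (fun x => if f x ≠ h x then (1:ℝ) else 0) μ)
    (hdissent_int : ∀ (i : ι) (y : Y),
      Integrable (fun z => if f z ≠ y then (1:ℝ) else 0) (orb i))
    (hκ_int : Integrable
      (fun i => ⨆ y : Y, ∫ z, (if f z ≠ y then (1:ℝ) else 0) ∂(orb i)) ν) :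
    ∫ x, (if f x ≠ h x then (1:ℝ) else 0) ∂μ ≤
      ∫ i, (⨆ y : Y, ∫ z, (if f z ≠ y then (1:ℝ) else 0) ∂(orb i)) ∂ν := by
  rw [hdecomp _ herr_int]
  apply integral_mono_of_nonneg
  · filter_upwards with i
    exact integral_nonneg (fun z => by positivity)
  · exact hκ_int
  · filter_upwards with i
    have hkey : ∫ z, (if f z ≠ h z then (1:ℝ) else 0) ∂(orb i)
        = ∫ z, (if f z ≠ h (rep i) then (1:ℝ) else 0) ∂(orb i) := by
      apply integral_congr_ae
      filter_upwards [horb i] with z hz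
      obtain ⟨g, rfl⟩ := hz
      rw [hinv g (rep i)]
    rw [hkey]
    exact le_ciSup (f := fun y : Y => ∫ z, (if f z ≠ y then (1:ℝ) else 0) ∂(orb i))
      (Set.Finite.bddAbove (Set.finite_range _)) (h (rep i))
end

section
/- Let X have probability measure with density q, let h_P : X → [0,1] be differentiable with gradient nowhere zero and upper Lipschitz constant K ≥ |∇h_P(x)| for all x. Suppose the push-forward density satisfies the coarea formula r(p) = ∫_{h_P^{-1}(p)} q(x)/|∇h_P(x)| dx_p. If G* ⊆ X has ∫_{G*} q(x) dx = Q and G* intersects every fiber h_P^{-1}(p) in the sense that ∫_{h_P^{-1}(p)} q/|∇h_P| dx_p ≥ Q/K for all p, and Acc(p) ≥ m' on [0,1], then ECE = ∫₀¹ r(p)|Acc(p) − p| dp ≥ (Q/K)·∫₀^{m'} (m' − p) dp = (Q/K)·m'²/2. -/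
open MeasureTheory intervalIntegral

/-- Lipschitz-controlled ECE lower bound: if the push-forward density `r` is given by
the coarea fiber integral `fiber`, every fiber integral is at least `Q/K`, and the
accuracy is bounded below by `m'`, then
`ECE ≥ (Q/K)·∫₀^{m'}(m' − p) dp = (Q/K)·m'²/2`. -/
theorem ece_lower_bound_lipschitz (r fiber Acc : ℝ → ℝ) (Q K m' : ℝ)
    (hK : 0 < K) (hQ : 0 ≤ Q)
    (hcoarea : ∀ p ∈ Set.Icc (0:ℝ) 1, r p = fiber p)
    (hfiber : ∀ p ∈ Set.Icc (0:ℝ) 1, Q / K ≤ fiber p)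
    (hm' : m' ∈ Set.Icc (0:ℝ) 1)
    (hAcc : ∀ p ∈ Set.Icc (0:ℝ) 1, Acc p ∈ Set.Icc (0:ℝ) 1)
    (hAcc_lb : ∀ p ∈ Set.Icc (0:ℝ) 1, m' ≤ Acc p)
    (hint : IntervalIntegrable (fun p => r p * |Acc p - p|) volume 0 1) :
    Q / K * ∫ p in (0:ℝ)..m', (m' - p) = Q / K * (m' ^ 2 / 2) ∧
    Q / K * (m' ^ 2 / 2) ≤ ∫ p in (0:ℝ)..1, r p * |Acc p - p| := by
  obtain ⟨hm0, hm1⟩ := hm'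
  have hQK : 0 ≤ Q / K := div_nonneg hQ hK.le
  have hval : (∫ p in (0:ℝ)..m', (m' - p)) = m' ^ 2 / 2 := by
    rw [integral_sub _root_.intervalIntegrable_const
      (intervalIntegrable_id)]
    simp [integral_id]
    ring
  refine ⟨by rw [hval], ?_⟩
  -- pointwise lower bounds
  have hlb : ∀ p ∈ Set.Icc (0:ℝ) 1, Q / K * (m' - p) ≤ r p * |Acc p - p| := by
    intro p hp
    by_cases hpm : p ≤ m'
    · have h1 : Q / K ≤ r p := (hcoarea p hp) ▸ hfiber p hp
      have h2 : m' - p ≤ |Acc p - p| := by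
        have := hAcc_lb p hp
        rw [abs_of_nonneg (by linarith)]
        linarith
      have hmp : 0 ≤ m' - p := by linarith
      calc Q / K * (m' - p) ≤ r p * (m' - p) := by
            exact mul_le_mul_of_nonneg_right h1 hmp
        _ ≤ r p * |Acc p - p| := by
            exact mul_le_mul_of_nonneg_left h2 (le_trans hQK h1)
    · have h1 : Q / K ≤ r p := (hcoarea p hp) ▸ hfiber p hp
      have : Q / K * (m' - p) ≤ 0 :=
        mul_nonpos_of_nonneg_of_nonpos hQK (by linarith)
      exact this.trans (mul_nonneg (le_trans hQK h1) (abs_nonneg _))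
  have hintg : IntervalIntegrable (fun p => Q / K * (m' - p)) volume 0 m' := by
    apply IntervalIntegrable.const_mul
    exact (_root_.intervalIntegrable_const).sub intervalIntegrable_id
  have hsub1 : IntervalIntegrable (fun p => r p * |Acc p - p|) volume 0 m' :=
    hint.mono_set (by
      rw [Set.uIcc_of_le hm0, Set.uIcc_of_le zero_le_one]
      exact Set.Icc_subset_Icc le_rfl hm1)
  have hsub2 : IntervalIntegrable (fun p => r p * |Acc p - p|) volume m' 1 :=
    hint.mono_set (by
      rw [Set.uIcc_of_le hm1, Set.uIcc_of_le zero_le_one]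
      exact Set.Icc_subset_Icc hm0 le_rfl)
  have hsplit : (∫ p in (0:ℝ)..1, r p * |Acc p - p|) =
      (∫ p in (0:ℝ)..m', r p * |Acc p - p|) + ∫ p in m'..1, r p * |Acc p - p| :=
    (integral_add_adjacent_intervals hsub1 hsub2).symm
  have hmono : (∫ p in (0:ℝ)..m', Q / K * (m' - p)) ≤
      ∫ p in (0:ℝ)..m', r p * |Acc p - p| := by
    apply integral_mono_on hm0 hintg hsub1
    intro p hp
    exact hlb p ⟨hp.1, hp.2.trans hm1⟩
  have hpos : 0 ≤ ∫ p in m'..1, r p * |Acc p - p| := by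
    apply integral_nonneg hm1
    intro p hp
    have hprp : Q / K ≤ r p :=
      (hcoarea p ⟨hm0.trans hp.1, hp.2⟩) ▸ hfiber p ⟨hm0.trans hp.1, hp.2⟩
    exact mul_nonneg (hQK.trans hprp) (abs_nonneg _)
  have hcalc : (∫ p in (0:ℝ)..m', Q / K * (m' - p)) = Q / K * (m' ^ 2 / 2) := by
    rw [intervalIntegral.integral_const_mul, hval]
  rw [hsplit]
  have := hcalc ▸ hmono
  linarith
end

section
/- Let X be partitioned (up to measure zero) into orbits {Gx : x ∈ F} indexed by a fundamental domain F, with probability density p on X and p(Gx) = ∫_{Gx} p(z) dz. If h : X → ℝⁿ is constant on each orbit (G-invariant) and f : X → ℝⁿ is square-integrable, then ∫_X p(x)·‖h(x) − f(x)‖₂² dx ≥ ∫_F p(Gx)·V_{Gx}[f] dx, where V_{Gx}[f] is the variance of f on the orbit Gx under the normalized density q(z) = p(z)/p(Gx). -/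
open MeasureTheory
open scoped InnerProductSpace

section Aux

variable {α : Type*} [MeasurableSpace α] {E : Type*} [NormedAddCommGroup E]
  [InnerProductSpace ℝ E] [CompleteSpace E]

private lemma sq_expand (c m y : E) :
    ‖c - y‖ ^ 2 = ‖c - m‖ ^ 2 + (2 * ⟪c - m, m - y⟫_ℝ + ‖m - y‖ ^ 2) := by
  have hcy : c - y = (c - m) + (m - y) := by abel
  rw [hcy, norm_add_sq_real]; ring

private lemma integrable_sq_const_sub (μ : Measure α) [IsFiniteMeasure μ]
    {f : α → E} (hf : Integrable f μ) (c m : E)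
    (hvar : Integrable (fun z => ‖m - f z‖ ^ 2) μ) :
    Integrable (fun z => ‖c - f z‖ ^ 2) μ := by
  have hfe : (fun z => ‖c - f z‖ ^ 2)
      = fun z => ‖c - m‖ ^ 2 + (2 * ⟪c - m, m - f z⟫_ℝ + ‖m - f z‖ ^ 2) := by
    funext z; exact sq_expand c m (f z)
  rw [hfe]
  exact (integrable_const _).add
    (((((integrable_const m).sub hf).const_inner _).const_mul 2).add hvar)

private lemma var_le_sq (μ : Measure α) [IsFiniteMeasure μ]
    {f : α → E} (hf : Integrable f μ) (c : E)
    (hvar : Integrable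
      (fun z => ‖((μ Set.univ).toReal)⁻¹ • (∫ w, f w ∂μ) - f z‖ ^ 2) μ) :
    ∫ z, ‖((μ Set.univ).toReal)⁻¹ • (∫ w, f w ∂μ) - f z‖ ^ 2 ∂μ
      ≤ ∫ z, ‖c - f z‖ ^ 2 ∂μ := by
  set m : E := ((μ Set.univ).toReal)⁻¹ • (∫ w, f w ∂μ) with hm
  by_cases h0 : μ = 0
  · simp [h0]
  · have htot : (μ Set.univ).toReal ≠ 0 :=
      ENNReal.toReal_ne_zero.mpr
        ⟨fun hz => h0 (Measure.measure_univ_eq_zero.mp hz), measure_ne_top _ _⟩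
    have hmf : Integrable (fun z => m - f z) μ := (integrable_const m).sub hf
    have hmean : ∫ z, (m - f z) ∂μ = 0 := by
      rw [integral_sub (integrable_const m) hf, integral_const, measureReal_def, hm,
        smul_inv_smul₀ htot, sub_self]
    have hinner : Integrable (fun z => ⟪c - m, m - f z⟫_ℝ) μ := hmf.const_inner _
    have hexp : ∫ z, ‖c - f z‖ ^ 2 ∂μ
        = (μ Set.univ).toReal * ‖c - m‖ ^ 2 + ∫ z, ‖m - f z‖ ^ 2 ∂μ := by
      calc ∫ z, ‖c - f z‖ ^ 2 ∂μ
          = ∫ z, (‖c - m‖ ^ 2 + (2 * ⟪c - m, m - f z⟫_ℝ + ‖m - f z‖ ^ 2)) ∂μ := by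
            exact integral_congr_ae (Filter.Eventually.of_forall fun z =>
              sq_expand c m (f z))
        _ = (∫ _z, ‖c - m‖ ^ 2 ∂μ)
            + ((∫ z, 2 * ⟪c - m, m - f z⟫_ℝ ∂μ) + ∫ z, ‖m - f z‖ ^ 2 ∂μ) := by
            have hsum : Integrable
                (fun z => 2 * ⟪c - m, m - f z⟫_ℝ + ‖m - f z‖ ^ 2) μ :=
              (hinner.const_mul 2).add hvar
            rw [integral_add (integrable_const _) hsum,
              integral_add (hinner.const_mul 2) hvar]
        _ = (μ Set.univ).toReal * ‖c - m‖ ^ 2 + ∫ z, ‖m - f z‖ ^ 2 ∂μ := by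
            rw [integral_const, measureReal_def, integral_const_mul, integral_inner hmf, hmean,
              inner_zero_right, smul_eq_mul]
            ring
    rw [hexp]
    have h1 : 0 ≤ (μ Set.univ).toReal * ‖c - m‖ ^ 2 :=
      mul_nonneg ENNReal.toReal_nonneg (sq_nonneg _)
    linarith

private lemma decomp_integrable {X ι : Type*} [MeasurableSpace X] [MeasurableSpace ι]
    (μ : Measure X) [IsProbabilityMeasure μ] (ν : Measure ι) (orb : ι → Measure X)
    [∀ i, IsFiniteMeasure (orb i)]
    (hdecomp : ∀ φ : X → ℝ, Integrable φ μ →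
      ∫ x, φ x ∂μ = ∫ i, (∫ z, φ z ∂(orb i)) ∂ν)
    (φ : X → ℝ) (hφ : Integrable φ μ) (hφorb : ∀ i, Integrable φ (orb i)) :
    Integrable (fun i => ∫ z, φ z ∂(orb i)) ν := by
  have hT : Integrable (fun i => ∫ _z, (1 : ℝ) ∂(orb i)) ν := by
    by_contra hc
    have h1 := hdecomp (fun _ => (1 : ℝ)) (integrable_const 1)
    rw [integral_undef hc] at h1
    simp [measure_univ] at h1
  set c : ℝ := ∫ x, φ x ∂μ with hc
  have hφ' : Integrable (fun x => φ x - (c - 1)) μ := hφ.sub (integrable_const _)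
  have hG : Integrable (fun i => ∫ z, (φ z - (c - 1)) ∂(orb i)) ν := by
    by_contra hcon
    have h1 := hdecomp _ hφ'
    rw [integral_undef hcon, integral_sub hφ (integrable_const _), integral_const,
      measureReal_def, measure_univ] at h1
    simp [hc] at h1
  have heq : (fun i => ∫ z, φ z ∂(orb i))
      = fun i => (∫ z, (φ z - (c - 1)) ∂(orb i))
          + (c - 1) * ∫ _z, (1 : ℝ) ∂(orb i) := by
    funext i
    rw [integral_sub (hφorb i) (integrable_const _), integral_const, integral_const,
      smul_eq_mul, smul_eq_mul]
    ring
  rw [heq]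
  exact hG.add (hT.const_mul _)

end Aux

/-- Invariant regression error lower bound: if `h` is `G`-invariant and the
probability measure `μ` on `X` decomposes into (unnormalized) orbit measures
`orb i` indexed by a fundamental domain `(ι, ν)`, then
`∫ p(x)‖h(x) − f(x)‖² dx ≥ ∫_F p(Gx)·V_{Gx}[f] dx`, where the right-hand side is
expressed as `∫ i, ∫ z, ‖E_i[f] − f z‖² ∂(orb i) ∂ν` with
`E_i[f] = (orb i univ)⁻¹ • ∫ f ∂(orb i)`. -/
theorem invariant_regression_error_lower_bound
    {X : Type*} [MeasurableSpace X] {n : ℕ}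
    {G : Type*} [Group G] [MulAction G X]
    {ι : Type*} [MeasurableSpace ι]
    (μ : Measure X) [IsProbabilityMeasure μ]
    (ν : Measure ι) (orb : ι → Measure X) [∀ i, IsFiniteMeasure (orb i)]
    (rep : ι → X)
    (hdecomp : ∀ φ : X → ℝ, Integrable φ μ →
      ∫ x, φ x ∂μ = ∫ i, (∫ z, φ z ∂(orb i)) ∂ν)
    (horb : ∀ i, ∀ᵐ z ∂(orb i), z ∈ MulAction.orbit G (rep i))
    (f h : X → EuclideanSpace ℝ (Fin n))
    (hinv : ∀ (g : G) (x : X), h (g • x) = h x)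
    (hf_int : ∀ i, Integrable f (orb i))
    (herr_int : Integrable (fun x => ‖h x - f x‖ ^ 2) μ)
    (hvar_int : ∀ i, Integrable
      (fun z => ‖((orb i Set.univ).toReal)⁻¹ • (∫ w, f w ∂(orb i)) - f z‖ ^ 2) (orb i))
    (houter_int : Integrable (fun i =>
      ∫ z, ‖((orb i Set.univ).toReal)⁻¹ • (∫ w, f w ∂(orb i)) - f z‖ ^ 2 ∂(orb i)) ν) :
    ∫ i, (∫ z, ‖((orb i Set.univ).toReal)⁻¹ • (∫ w, f w ∂(orb i)) - f z‖ ^ 2 ∂(orb i)) ∂ν ≤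
      ∫ x, ‖h x - f x‖ ^ 2 ∂μ := by
  have hconst_int : ∀ i, Integrable (fun z => ‖h (rep i) - f z‖ ^ 2) (orb i) :=
    fun i => integrable_sq_const_sub (orb i) (hf_int i) _ _ (hvar_int i)
  have hae : ∀ i, (fun z => ‖h (rep i) - f z‖ ^ 2)
      =ᵐ[orb i] fun z => ‖h z - f z‖ ^ 2 := by
    intro i
    filter_upwards [horb i] with z hz
    obtain ⟨g, hg⟩ := hz
    rw [← hg, hinv]
  have herr_orb : ∀ i, Integrable (fun x => ‖h x - f x‖ ^ 2) (orb i) :=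
    fun i => (hconst_int i).congr (hae i)
  have hψ : Integrable (fun i => ∫ z, ‖h z - f z‖ ^ 2 ∂(orb i)) ν :=
    decomp_integrable μ ν orb hdecomp _ herr_int herr_orb
  rw [hdecomp _ herr_int]
  refine integral_mono houter_int hψ ?_
  intro i
  have hcongr : ∫ z, ‖h z - f z‖ ^ 2 ∂(orb i)
      = ∫ z, ‖h (rep i) - f z‖ ^ 2 ∂(orb i) :=
    (integral_congr_ae (hae i)).symm
  dsimp only
  rw [hcongr]
  exact var_le_sq (orb i) (hf_int i) _ (hvar_int i)
end

section
/- Let X be partitioned into orbits indexed by a fundamental domain F as above, f : X → Y with Y finite, and h : X → Y constant on each orbit. Then the classification error ∫_X p(x)·1[f(x) ≠ h(x)] dx is at least ∫_F k(Gx) dx, where k(Gx) = min_{y ∈ Y} ∫_{Gx} p(z)·1[f(z) ≠ y] dz is the majority label total dissent. -/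
open MeasureTheory ENNReal

/-- Invariant classification error lower bound: if `h` is `G`-invariant (constant on
orbits) and the probability measure `μ` decomposes into orbit measures indexed by a
fundamental domain, then the classification error is at least
`∫_F k(Gx) dx`, where `k(Gx) = min_y ∫_{Gx} p(z)·1[f(z) ≠ y] dz` is the
majority label total dissent. -/
theorem classification_error_ge_majority_dissent
    {X : Type*} [MeasurableSpace X] {Y : Type*} [Fintype Y] [Nonempty Y] [DecidableEq Y]
    {G : Type*} [Group G] [MulAction G X]
    {ι : Type*} [MeasurableSpace ι]
    (μ : Measure X) [IsProbabilityMeasure μ]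
    (ν : Measure ι) (orb : ι → Measure X) (rep : ι → X)
    (hdecomp : ∀ φ : X → ℝ, Integrable φ μ →
      ∫ x, φ x ∂μ = ∫ i, (∫ z, φ z ∂(orb i)) ∂ν)
    (horb : ∀ i, ∀ᵐ z ∂(orb i), z ∈ MulAction.orbit G (rep i))
    (f h : X → Y)
    (hinv : ∀ (g : G) (x : X), h (g • x) = h x)
    (herr_int : Integrable (fun x => if f x ≠ h x then (1:ℝ) else 0) μ)
    (hdissent_int : ∀ (i : ι) (y : Y),
      Integrable (fun z => if f z ≠ y then (1:ℝ) else 0) (orb i))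
    (hk_int : Integrable
      (fun i => ⨅ y : Y, ∫ z, (if f z ≠ y then (1:ℝ) else 0) ∂(orb i)) ν) :
    ∫ i, (⨅ y : Y, ∫ z, (if f z ≠ y then (1:ℝ) else 0) ∂(orb i)) ∂ν ≤
      ∫ x, (if f x ≠ h x then (1:ℝ) else 0) ∂μ := by
  by_cases hY : ∀ y₁ y₂ : Y, y₁ = y₂
  · have h0 : ∀ (z : X) (y : Y), (if f z ≠ y then (1:ℝ) else 0) = 0 := by
      intro z y; simp [hY (f z) y]
    have h1 : ∀ x : X, (if f x ≠ h x then (1:ℝ) else 0) = 0 := fun x => by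
      simp [hY (f x) (h x)]
    simp only [h0, h1, integral_zero, ciInf_const, le_refl]
  · push_neg at hY
    obtain ⟨y₁, y₂, hy⟩ := hY
    set err : X → ℝ := fun x => if f x ≠ h x then (1:ℝ) else 0 with herrdef
    -- every orbit measure is finite
    have hfin : ∀ i, IsFiniteMeasure (orb i) := by
      intro i
      have hi1 := hdissent_int i y₁
      have hi2 := hdissent_int i y₂
      have hle : ∀ z, (1:ℝ≥0∞) ≤ (‖(if f z ≠ y₁ then (1:ℝ) else 0)‖₊ : ℝ≥0∞)
          + (‖(if f z ≠ y₂ then (1:ℝ) else 0)‖₊ : ℝ≥0∞) := by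
        intro z
        by_cases hz : f z = y₁
        · have hz2 : f z ≠ y₂ := by rw [hz]; exact hy
          simp [hz, hz2, hy]
        · simp [hz]
      constructor
      calc (orb i) Set.univ = ∫⁻ _, 1 ∂(orb i) := by simp
        _ ≤ ∫⁻ z, ((‖(if f z ≠ y₁ then (1:ℝ) else 0)‖₊ : ℝ≥0∞)
              + (‖(if f z ≠ y₂ then (1:ℝ) else 0)‖₊ : ℝ≥0∞)) ∂(orb i) :=
            lintegral_mono fun z => hle z
        _ ≤ (∫⁻ z, (‖(if f z ≠ y₁ then (1:ℝ) else 0)‖₊ : ℝ≥0∞) ∂(orb i))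
              + ∫⁻ z, (‖(if f z ≠ y₂ then (1:ℝ) else 0)‖₊ : ℝ≥0∞) ∂(orb i) := by
            rw [lintegral_add_left' hi1.aestronglyMeasurable.aemeasurable.nnnorm.coe_nnreal_ennreal]
        _ < ⊤ := ENNReal.add_lt_top.mpr ⟨hi1.2, hi2.2⟩
    -- on each orbit measure, err agrees a.e. with the dissent for the label h (rep i)
    have herr_orb : ∀ i, err =ᵐ[orb i] (fun z => if f z ≠ h (rep i) then (1:ℝ) else 0) := by
      intro i
      filter_upwards [horb i] with z hz
      obtain ⟨g, hg⟩ := hz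
      have hzh : h z = h (rep i) := by rw [← hg, hinv]
      simp only [herrdef, hzh]
    have herrint : ∀ i, Integrable err (orb i) := fun i =>
      (hdissent_int i (h (rep i))).congr (herr_orb i).symm
    set F : ι → ℝ := fun i => ∫ z, err z ∂(orb i) with hFdef
    set Gm : ι → ℝ := fun i => ∫ _, (1:ℝ) ∂(orb i) with hGdef
    have hGint : Integrable Gm ν := by
      by_contra hc
      have hd := hdecomp (fun _ => (1:ℝ)) (integrable_const 1)
      rw [integral_undef hc] at hd
      simp at hd
    have hsum : ∀ i, (∫ z, (err z + 1) ∂(orb i)) = F i + Gm i := by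
      intro i
      haveI := hfin i
      exact integral_add (herrint i) (integrable_const 1)
    have hPint : Integrable (fun i => ∫ z, (err z + 1) ∂(orb i)) ν := by
      by_contra hc
      have hd := hdecomp (fun x => err x + 1) (herr_int.add (integrable_const 1))
      rw [integral_undef hc] at hd
      have h2 : ∫ x, (err x + 1) ∂μ = (∫ x, err x ∂μ) + 1 := by
        rw [integral_add herr_int (integrable_const 1)]; simp
      have h3 : (0:ℝ) ≤ ∫ x, err x ∂μ := by
        apply integral_nonneg
        intro x
        simp only [herrdef]
        split_ifs <;> norm_num
      rw [h2] at hd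
      linarith
    have hFint : Integrable F ν := by
      have h2 : Integrable (fun i => F i + Gm i) ν := by
        simpa only [hsum] using hPint
      exact (h2.sub hGint).congr (Filter.Eventually.of_forall fun i => by simp)
    have hk_le : ∀ i, (⨅ y : Y, ∫ z, (if f z ≠ y then (1:ℝ) else 0) ∂(orb i)) ≤ F i := by
      intro i
      have hFi : F i = ∫ z, (if f z ≠ h (rep i) then (1:ℝ) else 0) ∂(orb i) :=
        integral_congr_ae (herr_orb i)
      rw [hFi]
      exact ciInf_le (Set.Finite.bddBelow (Set.finite_range _)) (h (rep i))
    calc ∫ i, (⨅ y : Y, ∫ z, (if f z ≠ y then (1:ℝ) else 0) ∂(orb i)) ∂ν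
        ≤ ∫ i, F i ∂ν := integral_mono hk_int hFint hk_le
      _ = ∫ x, err x ∂μ := (hdecomp err herr_int).symm
end
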